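/- Let r > 0 and n ≥ 1. Let X_1,…,X_n and Y_1,…,Y_n be nonempty compact metric spaces each of diameter at most r, let Z be a compact (r,n)-stacked space over X_1,…,X_n and W a compact (r,n)-stacked space over Y_1,…,Y_n. Then d_GH(Z, W) ≤ max_{1≤k≤n} d_GH(X_k, Y_k). -/

import Mathlib

/-!
Both stacked spaces embed isometrically into `ℝ × ℝ × (Fin n → ℓ^∞)`: the first coordinate is
the height `5r(k+1)` of the `k`-th level (`0` at the poles), the second separates the two poles,
and the `k`-th factor carries the `k`-th level through an optimal realisation of
`d_GH(X_k, Y_k)` in `ℓ^∞`, all other factors sitting at a base point of their level. As the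
levels have diameter at most `r`, the distance between points on different levels is the
difference of their heights, so the embeddings are isometric. With the base points for `Z` and
`W` chosen within `d_GH(X_k, Y_k)` of each other, every point of either image is then within
`max_k d_GH(X_k, Y_k)` of the other image.
-/

open GromovHausdorff Metric Set Function

open scoped ENNReal

universe u v w

def IsStackedSpace (r : ℝ) {n : ℕ} (X : Fin n → Type u) [∀ k, MetricSpace (X k)]
    (Z : Type v) [MetricSpace Z] (p : Bool → Z) (P : Fin n → Set Z) : Prop :=
  dist (p true) (p false) = 3 * r ∧
  (Pairwise fun k l : Fin n => Disjoint (P k) (P l)) ∧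
  (∀ (k : Fin n) (s : Bool), p s ∉ P k) ∧
  ({p true, p false} ∪ ⋃ k, P k) = Set.univ ∧
  (∀ k : Fin n, Nonempty (X k ≃ᵢ (P k : Set Z))) ∧
  (∀ (k : Fin n) (s : Bool), ∀ z ∈ P k, dist (p s) z = 5 * r * ((k : ℕ) + 1)) ∧
  (∀ k l : Fin n, k ≠ l → ∀ z ∈ P k, ∀ w ∈ P l,
    dist z w = 5 * r * |((k : ℕ) : ℝ) - ((l : ℕ) : ℝ)|)

lemma one_le_abs_natCast_sub_natCast {a b : ℕ} (h : a ≠ b) : 1 ≤ |(a : ℝ) - (b : ℝ)| := by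
  have : (1 : ℤ) ≤ |(a : ℤ) - b| := Int.one_le_abs (sub_ne_zero.2 (by exact_mod_cast h))
  exact_mod_cast this

lemma dist_le_of_diam_univ_le {X : Type*} [MetricSpace X] [CompactSpace X] {r : ℝ}
    (h : diam (univ : Set X) ≤ r) (x y : X) : dist x y ≤ r :=
  (dist_le_diam_of_mem isBounded_of_compactSpace (mem_univ x) (mem_univ y)).trans h

lemma IsCompact.exists_dist_le_hausdorffDist {α : Type*} [PseudoMetricSpace α] {s t : Set α}
    (hs : IsCompact s) (ht : IsCompact t) (htn : t.Nonempty) {x : α} (hx : x ∈ s) :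
    ∃ y ∈ t, dist x y ≤ hausdorffDist s t := by
  obtain ⟨y, hy, hxy⟩ := ht.exists_infDist_eq_dist htn x
  refine ⟨y, hy, hxy ▸ infDist_le_hausdorffDist_of_mem hx ?_⟩
  exact hausdorffEDist_ne_top_of_nonempty_of_bounded ⟨x, hx⟩ htn hs.isBounded ht.isBounded

lemma hausdorffDist_range_le_of_forall_exists_dist_le {α β γ : Type*} [PseudoMetricSpace γ]
    {f : α → γ} {g : β → γ} {S : ℝ} (hS : 0 ≤ S) (hfg : ∀ a, ∃ b, dist (f a) (g b) ≤ S)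
    (hgf : ∀ b, ∃ a, dist (g b) (f a) ≤ S) : hausdorffDist (range f) (range g) ≤ S := by
  refine hausdorffDist_le_of_mem_dist hS ?_ ?_
  · rintro _ ⟨a, rfl⟩
    obtain ⟨b, hb⟩ := hfg a
    exact ⟨g b, mem_range_self b, hb⟩
  · rintro _ ⟨b, rfl⟩
    obtain ⟨a, ha⟩ := hgf b
    exact ⟨f a, mem_range_self a, ha⟩

lemma GromovHausdorff.exists_isometry_forall_exists_dist_le_ghDist (X : Type u) [MetricSpace X]
    [CompactSpace X] [Nonempty X] (Y : Type v) [MetricSpace Y] [CompactSpace Y] [Nonempty Y] :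
    ∃ (Φ : X → lp (fun _ : ℕ => ℝ) ∞) (Ψ : Y → lp (fun _ : ℕ => ℝ) ∞), Isometry Φ ∧ Isometry Ψ ∧
      (∀ x, ∃ y, dist (Φ x) (Ψ y) ≤ ghDist X Y) ∧ ∀ y, ∃ x, dist (Ψ y) (Φ x) ≤ ghDist X Y := by
  obtain ⟨Φ, Ψ, hΦ, hΨ, hgh⟩ := ghDist_eq_hausdorffDist X Y
  have hΦc := isCompact_range hΦ.continuous
  have hΨc := isCompact_range hΨ.continuous
  refine ⟨Φ, Ψ, hΦ, hΨ, fun x => ?_, fun y => ?_⟩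
  · obtain ⟨_, ⟨y, rfl⟩, hy⟩ :=
      hΦc.exists_dist_le_hausdorffDist hΨc (range_nonempty Ψ) (mem_range_self x)
    exact ⟨y, hgh ▸ hy⟩
  · obtain ⟨_, ⟨x, rfl⟩, hx⟩ :=
      hΨc.exists_dist_le_hausdorffDist hΦc (range_nonempty Φ) (mem_range_self y)
    exact ⟨x, hgh ▸ hausdorffDist_comm (s := range Φ) ▸ hx⟩

section StackedModel

variable {E : Type*} {n : ℕ} {r : ℝ}

def levelPt (r : ℝ) (b : Fin n → E) (k : Fin n) (c : E) : ℝ × ℝ × (Fin n → E) :=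
  (5 * r * ((k : ℕ) + 1), 0, update b k c)

def polePt (r : ℝ) (b : Fin n → E) (s : Bool) : ℝ × ℝ × (Fin n → E) :=
  (0, if s then 3 * r else 0, b)

variable [PseudoMetricSpace E]

lemma dist_update_update_self (b : Fin n → E) (k : Fin n) (c c' : E) :
    dist (update b k c) (update b k c') = dist c c' := by
  refine le_antisymm ((dist_pi_le_iff dist_nonneg).2 fun i => ?_) ?_
  · rcases eq_or_ne i k with rfl | hi
    · simp
    · simp [update_of_ne hi]
  · simpa using dist_le_pi_dist (update b k c) (update b k c') k

lemma dist_update_update_le {b b' : Fin n → E} {k : Fin n} {c c' : E} {S : ℝ}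
    (hc : dist c c' ≤ S) (hb : ∀ i, dist (b i) (b' i) ≤ S) :
    dist (update b k c) (update b' k c') ≤ S := by
  refine (dist_pi_le_iff (dist_nonneg.trans hc)).2 fun i => ?_
  rcases eq_or_ne i k with rfl | hi
  · simpa using hc
  · simpa [update_of_ne hi] using hb i

lemma dist_update_update_of_ne_le {b : Fin n → E} {k l : Fin n} (hkl : k ≠ l) {c c' : E} {R : ℝ}
    (hc : dist c (b k) ≤ R) (hc' : dist c' (b l) ≤ R) :
    dist (update b k c) (update b l c') ≤ R := by
  refine (dist_pi_le_iff (dist_nonneg.trans hc)).2 fun i => ?_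
  rcases eq_or_ne i k with rfl | hik
  · simpa [update_of_ne hkl] using hc
  rcases eq_or_ne i l with rfl | hil
  · simpa [update_of_ne hik, dist_comm] using hc'
  · simpa [update_of_ne hik, update_of_ne hil] using dist_nonneg.trans hc

lemma dist_levelPt_levelPt_self (b : Fin n → E) (k : Fin n) (c c' : E) :
    dist (levelPt r b k c) (levelPt r b k c') = dist c c' := by
  simp [levelPt, Prod.dist_eq, dist_update_update_self]

lemma dist_levelPt_levelPt_of_ne (hr : 0 ≤ r) {b : Fin n → E} {k l : Fin n} (hkl : k ≠ l)
    {c c' : E} (hc : dist c (b k) ≤ 5 * r) (hc' : dist c' (b l) ≤ 5 * r) :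
    dist (levelPt r b k c) (levelPt r b l c') = 5 * r * |((k : ℕ) : ℝ) - ((l : ℕ) : ℝ)| := by
  have hkl' : 1 ≤ |((k : ℕ) : ℝ) - ((l : ℕ) : ℝ)| :=
    one_le_abs_natCast_sub_natCast (Fin.val_ne_of_ne hkl)
  have hfib : dist (update b k c) (update b l c') ≤ 5 * r * |((k : ℕ) : ℝ) - ((l : ℕ) : ℝ)| :=
    dist_update_update_of_ne_le hkl (hc.trans (by nlinarith)) (hc'.trans (by nlinarith))
  have hheight : dist (5 * r * ((k : ℕ) + 1)) (5 * r * ((l : ℕ) + 1))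
      = 5 * r * |((k : ℕ) : ℝ) - ((l : ℕ) : ℝ)| := by
    rw [Real.dist_eq, ← mul_sub, abs_mul, abs_of_nonneg (by linarith), add_sub_add_right_eq_sub]
  simp only [levelPt, Prod.dist_eq, dist_self, hheight]
  rw [max_eq_left (max_le (by positivity) hfib)]

lemma dist_polePt_levelPt (hr : 0 ≤ r) {b : Fin n → E} {k : Fin n} {c : E}
    (hc : dist c (b k) ≤ 5 * r) (s : Bool) :
    dist (polePt r b s) (levelPt r b k c) = 5 * r * ((k : ℕ) + 1) := by
  have hk : 5 * r ≤ 5 * r * ((k : ℕ) + 1) := le_mul_of_one_le_right (by linarith) (by simp)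
  have hfib : dist b (update b k c) ≤ 5 * r * ((k : ℕ) + 1) := by
    simpa using (dist_update_update_self b k (b k) c).trans_le (dist_comm c _ ▸ hc.trans hk)
  have hpole : |(if s then 3 * r else 0) - 0| ≤ 5 * r * ((k : ℕ) + 1) := by
    cases s <;> simp [abs_of_nonneg hr] <;> linarith
  simp only [polePt, levelPt, Prod.dist_eq, Real.dist_eq, zero_sub, abs_neg]
  rw [abs_of_nonneg (by positivity), max_eq_left (max_le hpole hfib)]

lemma dist_polePt_true_false (hr : 0 ≤ r) (b : Fin n → E) :
    dist (polePt r b true) (polePt r b false) = 3 * r := by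
  simp [polePt, Prod.dist_eq, abs_of_nonneg hr, hr]

lemma dist_polePt_polePt_le {b b' : Fin n → E} {S : ℝ} (hS : 0 ≤ S)
    (hb : ∀ i, dist (b i) (b' i) ≤ S) (s : Bool) : dist (polePt r b s) (polePt r b' s) ≤ S := by
  simpa [polePt, Prod.dist_eq, hS] using (dist_pi_le_iff hS).2 hb

lemma dist_levelPt_levelPt_le {b b' : Fin n → E} {k : Fin n} {c c' : E} {S : ℝ}
    (hc : dist c c' ≤ S) (hb : ∀ i, dist (b i) (b' i) ≤ S) :
    dist (levelPt r b k c) (levelPt r b' k c') ≤ S := by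
  simpa [levelPt, Prod.dist_eq, dist_nonneg.trans hc] using dist_update_update_le hc hb

end StackedModel

namespace IsStackedSpace

variable {r : ℝ} {n : ℕ} {X : Fin n → Type u} [∀ k, MetricSpace (X k)] {Z : Type v}
  [MetricSpace Z] {p : Bool → Z} {P : Fin n → Set Z}

lemma eq_pole_or_mem (hZ : IsStackedSpace r X Z p P) (z : Z) :
    (∃ s, z = p s) ∨ ∃ k, z ∈ P k := by
  have hz : z ∈ ({p true, p false} ∪ ⋃ k, P k : Set Z) := hZ.2.2.2.1 ▸ mem_univ z
  rcases hz with (h | h) | h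
  · exact Or.inl ⟨true, h⟩
  · exact Or.inl ⟨false, h⟩
  · exact Or.inr (mem_iUnion.1 h)

lemma dist_pole_pole (hZ : IsStackedSpace r X Z p P) : dist (p true) (p false) = 3 * r := hZ.1

lemma dist_pole_of_mem (hZ : IsStackedSpace r X Z p P) (s : Bool) {z : Z} {k : Fin n}
    (hz : z ∈ P k) : dist (p s) z = 5 * r * ((k : ℕ) + 1) :=
  hZ.2.2.2.2.2.1 k s z hz

lemma dist_of_mem_of_ne (hZ : IsStackedSpace r X Z p P) {k l : Fin n} (hkl : k ≠ l) {z w : Z}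
    (hz : z ∈ P k) (hw : w ∈ P l) : dist z w = 5 * r * |((k : ℕ) : ℝ) - ((l : ℕ) : ℝ)| :=
  hZ.2.2.2.2.2.2 k l hkl z hz w hw

lemma nonempty_isometryEquiv (hZ : IsStackedSpace r X Z p P) (k : Fin n) :
    Nonempty (X k ≃ᵢ P k) :=
  hZ.2.2.2.2.1 k

lemma pole_notMem (hZ : IsStackedSpace r X Z p P) (s : Bool) (k : Fin n) : p s ∉ P k :=
  hZ.2.2.1 k s

lemma pole_true_ne_false (hr : 0 < r) (hZ : IsStackedSpace r X Z p P) : p true ≠ p false := by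
  intro h
  have := hZ.dist_pole_pole
  rw [h, dist_self] at this
  linarith

lemma eq_of_mem_of_mem (hZ : IsStackedSpace r X Z p P) {z : Z} {k l : Fin n} (hk : z ∈ P k)
    (hl : z ∈ P l) : k = l := by
  by_contra hkl
  exact disjoint_left.1 (hZ.2.1 hkl) hk hl

end IsStackedSpace

section StackedEmbedding

variable {E : Type*} {r : ℝ} {n : ℕ} {X : Fin n → Type u}
  [∀ k, MetricSpace (X k)] {Z : Type v} [MetricSpace Z] {p : Bool → Z} {P : Fin n → Set Z}

open Classical in
noncomputable def stackedEmbedding (r : ℝ) (p : Bool → Z) (P : Fin n → Set Z)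
    (e : ∀ k, X k ≃ᵢ P k) (j : ∀ k, X k → E) (b : Fin n → E) (z : Z) : ℝ × ℝ × (Fin n → E) :=
  if h : ∃ k, z ∈ P k then levelPt r b h.choose (j _ ((e _).symm ⟨z, h.choose_spec⟩))
  else polePt r b (decide (z = p true))

variable {e : ∀ k, X k ≃ᵢ P k} {j : ∀ k, X k → E} {b : Fin n → E}

lemma stackedEmbedding_of_mem (hZ : IsStackedSpace r X Z p P) {z : Z} {k : Fin n}
    (hz : z ∈ P k) :
    stackedEmbedding r p P e j b z = levelPt r b k (j k ((e k).symm ⟨z, hz⟩)) := by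
  have h : ∃ k, z ∈ P k := ⟨k, hz⟩
  have key : ∀ l (hl : z ∈ P l), l = k →
      levelPt r b l (j l ((e l).symm ⟨z, hl⟩)) = levelPt r b k (j k ((e k).symm ⟨z, hz⟩)) := by
    rintro _ _ rfl
    rfl
  rw [stackedEmbedding, dif_pos h]
  exact key _ h.choose_spec (hZ.eq_of_mem_of_mem h.choose_spec hz)

lemma stackedEmbedding_pole (hr : 0 < r) (hZ : IsStackedSpace r X Z p P) (s : Bool) :
    stackedEmbedding r p P e j b (p s) = polePt r b s := by
  have h : ¬∃ k, p s ∈ P k := fun ⟨k, hk⟩ => hZ.pole_notMem s k hk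
  rw [stackedEmbedding, dif_neg h]
  cases s
  · simp [(hZ.pole_true_ne_false hr).symm]
  · simp

variable [PseudoMetricSpace E]

theorem isometry_stackedEmbedding (hr : 0 < r) (hZ : IsStackedSpace r X Z p P)
    (hj : ∀ k, Isometry (j k)) (hb : ∀ k x, dist (j k x) (b k) ≤ 5 * r) :
    Isometry (stackedEmbedding r p P e j b) := by
  refine Isometry.of_dist_eq fun z z' => ?_
  rcases hZ.eq_pole_or_mem z with ⟨s, rfl⟩ | ⟨k, hz⟩ <;>
    rcases hZ.eq_pole_or_mem z' with ⟨s', rfl⟩ | ⟨l, hz'⟩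
  · rw [stackedEmbedding_pole hr hZ, stackedEmbedding_pole hr hZ]
    cases s <;> cases s' <;>
      simp [dist_polePt_true_false hr.le, hZ.dist_pole_pole, dist_comm (polePt r b false),
        dist_comm (p false)]
  · rw [stackedEmbedding_pole hr hZ, stackedEmbedding_of_mem hZ hz',
      dist_polePt_levelPt hr.le (hb _ _), hZ.dist_pole_of_mem s hz']
  · rw [stackedEmbedding_pole hr hZ, stackedEmbedding_of_mem hZ hz, dist_comm,
      dist_polePt_levelPt hr.le (hb _ _), dist_comm, hZ.dist_pole_of_mem s' hz]
  · rw [stackedEmbedding_of_mem hZ hz, stackedEmbedding_of_mem hZ hz']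
    rcases eq_or_ne k l with rfl | hkl
    · rw [dist_levelPt_levelPt_self, (hj k).dist_eq, (e k).symm.dist_eq, Subtype.dist_eq]
    · rw [dist_levelPt_levelPt_of_ne hr.le hkl (hb _ _) (hb _ _), hZ.dist_of_mem_of_ne hkl hz hz']

theorem isometry_stackedEmbedding_of_diam_le (hr : 0 < r) (hZ : IsStackedSpace r X Z p P)
    [∀ k, CompactSpace (X k)] (hd : ∀ k, diam (univ : Set (X k)) ≤ r) (hj : ∀ k, Isometry (j k))
    (x₀ : ∀ k, X k) : Isometry (stackedEmbedding r p P e j fun k => j k (x₀ k)) := by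
  refine isometry_stackedEmbedding hr hZ hj fun k x => ?_
  rw [(hj k).dist_eq]
  linarith [dist_le_of_diam_univ_le (hd k) x (x₀ k)]

lemma exists_dist_stackedEmbedding_le (hr : 0 < r) (hZ : IsStackedSpace r X Z p P)
    {Y : Fin n → Type u} [∀ k, MetricSpace (Y k)] {W : Type w} [MetricSpace W] {q : Bool → W}
    {Q : Fin n → Set W} (hW : IsStackedSpace r Y W q Q) (f : ∀ k, Y k ≃ᵢ Q k)
    {j' : ∀ k, Y k → E} {b' : Fin n → E} {S : ℝ} (hS : 0 ≤ S)
    (hbb : ∀ k, dist (b k) (b' k) ≤ S) (hjj : ∀ k x, ∃ y, dist (j k x) (j' k y) ≤ S) (z : Z) :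
    ∃ w, dist (stackedEmbedding r p P e j b z) (stackedEmbedding r q Q f j' b' w) ≤ S := by
  rcases hZ.eq_pole_or_mem z with ⟨s, rfl⟩ | ⟨k, hz⟩
  · refine ⟨q s, ?_⟩
    rw [stackedEmbedding_pole hr hZ, stackedEmbedding_pole hr hW]
    exact dist_polePt_polePt_le hS hbb s
  · obtain ⟨y, hy⟩ := hjj k ((e k).symm ⟨z, hz⟩)
    refine ⟨f k y, ?_⟩
    rw [stackedEmbedding_of_mem hZ hz, stackedEmbedding_of_mem hW (f k y).2, Subtype.coe_eta,
      IsometryEquiv.symm_apply_apply]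
    exact dist_levelPt_levelPt_le hy hbb

end StackedEmbedding

theorem ghDist_stackedSpace_le (r : ℝ) (hr : 0 < r) (n : ℕ)
    (X Y : Fin n → Type u)
    [∀ k, MetricSpace (X k)] [∀ k, CompactSpace (X k)] [∀ k, Nonempty (X k)]
    [∀ k, MetricSpace (Y k)] [∀ k, CompactSpace (Y k)] [∀ k, Nonempty (Y k)]
    (hdX : ∀ k, Metric.diam (Set.univ : Set (X k)) ≤ r)
    (hdY : ∀ k, Metric.diam (Set.univ : Set (Y k)) ≤ r)
    (Z : Type v) [MetricSpace Z] [CompactSpace Z] [Nonempty Z]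
    (W : Type w) [MetricSpace W] [CompactSpace W] [Nonempty W]
    (p : Bool → Z) (P : Fin n → Set Z) (hZ : IsStackedSpace r X Z p P)
    (q : Bool → W) (Q : Fin n → Set W) (hW : IsStackedSpace r Y W q Q) :
    ghDist Z W ≤ ⨆ k : Fin n, ghDist (X k) (Y k) := by
  set S := ⨆ k : Fin n, ghDist (X k) (Y k)
  have hS : 0 ≤ S := Real.iSup_nonneg fun _ => dist_nonneg
  have hgS : ∀ k, ghDist (X k) (Y k) ≤ S := le_ciSup (Finite.bddAbove_range _)
  choose Φ Ψ hΦ hΨ hΦΨ hΨΦ using fun k => exists_isometry_forall_exists_dist_le_ghDist (X k) (Y k)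
  replace hΦΨ : ∀ k x, ∃ y, dist (Φ k x) (Ψ k y) ≤ S := fun k x =>
    (hΦΨ k x).imp fun _ h => h.trans (hgS k)
  replace hΨΦ : ∀ k y, ∃ x, dist (Ψ k y) (Φ k x) ≤ S := fun k y =>
    (hΨΦ k y).imp fun _ h => h.trans (hgS k)
  let x₀ : ∀ k, X k := fun _ => Classical.arbitrary _
  choose y₀ hy₀ using fun k => hΦΨ k (x₀ k)
  let e := fun k => (hZ.nonempty_isometryEquiv k).some
  let f := fun k => (hW.nonempty_isometryEquiv k).some
  calc ghDist Z W
      ≤ hausdorffDist (range (stackedEmbedding r p P e Φ fun k => Φ k (x₀ k)))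
          (range (stackedEmbedding r q Q f Ψ fun k => Ψ k (y₀ k))) :=
        ghDist_le_hausdorffDist (isometry_stackedEmbedding_of_diam_le hr hZ hdX hΦ x₀)
          (isometry_stackedEmbedding_of_diam_le hr hW hdY hΨ y₀)
    _ ≤ S := hausdorffDist_range_le_of_forall_exists_dist_le hS
        (exists_dist_stackedEmbedding_le hr hZ hW f hS hy₀ hΦΨ)
        (exists_dist_stackedEmbedding_le hr hW hZ e hS
          (fun k => (dist_comm _ _).trans_le (hy₀ k)) hΨΦ)
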